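/- Let $P \subset \mathbb{R}^n$ be a polytope and $E$ a finite set of vectors containing all edge directions of $P$. Then the monotone diameter of $P$ is at most the monotone diameter of the zonotope $Z(E)$ generated by $E$; in particular, the monotone diameter of $P$ is at most $|E|$, the number of distinct edge directions of $P$. -/

import Mathlib

/-- The zonotope generated by a finite set E of vectors. -/
def zonotopeOf (n : ℕ) (E : Finset (Fin n → ℝ)) : Set (Fin n → ℝ) :=
  {x | ∃ t : (Fin n → ℝ) → ℝ, (∀ e, 0 ≤ t e ∧ t e ≤ 1) ∧ x = ∑ e ∈ E, t e • e}

/-- `HasMonoPathLe n P c x0 N`: from the vertex x0 of P there is a c-monotone edge path of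
length at most N ending at the c-minimal vertex of P. -/
def HasMonoPathLe (n : ℕ) (P : Set (Fin n → ℝ)) (c : Fin n → ℝ)
    (x0 : Fin n → ℝ) (N : ℕ) : Prop :=
  ∃ L, L ≤ N ∧ ∃ p : Fin (L + 1) → (Fin n → ℝ),
    p 0 = x0 ∧ (∀ t, p t ∈ Set.extremePoints ℝ P) ∧
    (∀ t : Fin L, p t.castSucc ≠ p t.succ ∧
      IsExposed ℝ P (segment ℝ (p t.castSucc) (p t.succ)) ∧
      ∑ i, c i * p t.succ i < ∑ i, c i * p t.castSucc i) ∧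
    ∀ y ∈ P, ∑ i, c i * p (Fin.last L) i ≤ ∑ i, c i * y i

/-! The upper bound on `P` is the shadow vertex argument. Given a vertex `x₀`, choose a generic
`d` for which `x₀` is the unique minimizer of `c + d`, and follow the minimizer of `c + t • d`
while `t` decreases from `1` to `0`. Each time the minimizer changes, at a parameter `s`, the face
minimizing `c + s • d` is an edge `[x, y]` with `c y < c x`, and its direction `u` satisfies
`(c + s • d) u = 0`. As `u` is parallel to some `e ∈ E`, the parameter `s` depends only on the
line `ℝ e`, and these parameters decrease along the path. So the path has at most as many edges
as there are lines spanned by generators `e` with `c e ≠ 0`.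

This number is also a lower bound for the zonotope. The vertices of `Z(E)` are subset sums
`∑ e ∈ S, e`. A `c`-maximal vertex has every `e` with `c e > 0` in its subset and every `e` with
`c e < 0` outside it; a `c`-minimal vertex has the reverse. Along a monotone path from the first
to the second, each such `e` changes membership at some edge, and an edge of `Z(E)` only changes
the membership of generators parallel to it. -/

open Set Filter Topology

section ExposedFaces

variable {W : Type*} [NormedAddCommGroup W] [NormedSpace ℝ W]

theorem ContinuousLinearMap.toExposed_convexHull (l : StrongDual ℝ W) (s : Finset W) :
    l.toExposed (convexHull ℝ (s : Set W)) = convexHull ℝ (l.toExposed (s : Set W)) := by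
  apply Subset.antisymm
  · rintro _ ⟨hz, hzmax⟩
    obtain ⟨w, hw0, hw1, rfl⟩ := Finset.mem_convexHull'.1 hz
    set z := ∑ v ∈ s, w v • v
    have hle : ∀ v ∈ s, l v ≤ l z := fun v hv => hzmax v (subset_convexHull ℝ _ hv)
    have hsupp : ∀ v ∈ s, w v ≠ 0 → l v = l z := by
      have hsum : ∑ v ∈ s, w v * (l z - l v) = 0 := by
        simp only [mul_sub, Finset.sum_sub_distrib, ← Finset.sum_mul, hw1, one_mul]
        simp [z, map_sum, map_smul]
      intro v hv hwv
      have := (Finset.sum_eq_zero_iff_of_nonneg fun v hv =>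
        mul_nonneg (hw0 v hv) (sub_nonneg.2 (hle v hv))).1 hsum v hv
      linarith [(mul_eq_zero.1 this).resolve_left hwv]
    have hw1' : ∑ v ∈ s with l v = l z, w v = 1 :=
      hw1 ▸ Finset.sum_filter_of_ne fun v hv hwv => hsupp v hv hwv
    have hz' : ∑ v ∈ s with l v = l z, w v • v = z :=
      Finset.sum_filter_of_ne fun v hv hwv => hsupp v hv (left_ne_zero_of_smul hwv)
    rw [← hz']
    refine (convex_convexHull ℝ _).sum_mem (fun v hv => hw0 v (Finset.mem_filter.1 hv).1) hw1'
      fun v hv => subset_convexHull ℝ _ ?_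
    obtain ⟨hv, hlv⟩ := Finset.mem_filter.1 hv
    exact ⟨hv, fun y hy => hlv ▸ hle y hy⟩
  · refine convexHull_min (fun v ⟨hv, hvmax⟩ => ⟨subset_convexHull ℝ _ hv, fun y hy => ?_⟩)
      ((ContinuousLinearMap.toExposed.isExposed).convex (convex_convexHull ℝ _))
    exact convexHull_min hvmax (convex_halfSpace_le l.toLinearMap.isLinear _) hy

theorem mem_extremePoints_convexHull_of_forall_lt {l : StrongDual ℝ W} {s : Finset W} {x : W}
    (hx : x ∈ s) (hlt : ∀ v ∈ s, v ≠ x → l v < l x) :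
    x ∈ (convexHull ℝ (s : Set W)).extremePoints ℝ := by
  have hface : l.toExposed (s : Set W) = {x} := by
    refine eq_singleton_iff_unique_mem.2 ⟨⟨hx, fun v hv => ?_⟩, fun v hv => ?_⟩
    · rcases eq_or_ne v x with rfl | hvx
      exacts [le_rfl, (hlt v hv hvx).le]
    · by_contra hvx
      exact (hv.2 x hx).not_gt (hlt v hv.1 hvx)
  apply exposedPoints_subset_extremePoints
  rw [mem_exposedPoints_iff_exposed_singleton, ← convexHull_singleton (𝕜 := ℝ) x, ← hface,
    ← l.toExposed_convexHull]
  exact ContinuousLinearMap.toExposed.isExposed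

theorem isExposed_convexHull_segment {l : StrongDual ℝ W} {s : Finset W} {x y : W}
    (hx : x ∈ l.toExposed (s : Set W)) (hy : y ∈ l.toExposed (s : Set W))
    (hsub : l.toExposed (s : Set W) ⊆ segment ℝ x y) :
    IsExposed ℝ (convexHull ℝ (s : Set W)) (segment ℝ x y) := by
  have hface : convexHull ℝ (l.toExposed (s : Set W)) = segment ℝ x y :=
    (convexHull_min hsub (convex_segment x y)).antisymm
      (convexHull_pair (𝕜 := ℝ) x y ▸ convexHull_mono (pair_subset hx hy))
  rw [← hface, ← l.toExposed_convexHull]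
  exact ContinuousLinearMap.toExposed.isExposed

theorem exists_mem_extremePoints_mem_toExposed {A : Set W} (hA : IsCompact A) (hne : A.Nonempty)
    (l : StrongDual ℝ W) : ∃ x ∈ A.extremePoints ℝ, x ∈ l.toExposed A := by
  have hexp : IsExposed ℝ A (l.toExposed A) := ContinuousLinearMap.toExposed.isExposed
  obtain ⟨x, hx, hxmax⟩ := hA.exists_isMaxOn hne l.continuous.continuousOn
  obtain ⟨z, hz⟩ := (hexp.isCompact hA).extremePoints_nonempty
    ⟨x, hx, fun y hy => isMaxOn_iff.1 hxmax y hy⟩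
  exact ⟨z, hexp.isExtreme.extremePoints_subset_extremePoints hz, hz.1⟩

theorem exists_forall_lt_of_mem_extremePoints {s : Finset W} {x : W}
    (hx : x ∈ (convexHull ℝ (s : Set W)).extremePoints ℝ) :
    x ∈ s ∧ ∃ l : StrongDual ℝ W, ∀ v ∈ s, v ≠ x → l x < l v := by
  classical
  have hxs : x ∈ s := by exact_mod_cast extremePoints_convexHull_subset hx
  have hnot : x ∉ convexHull ℝ ((s.erase x : Finset W) : Set W) := fun hmem =>
    ((convex_convexHull ℝ _).mem_extremePoints_iff_mem_sdiff_convexHull_sdiff.1 hx).2 <|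
      convexHull_mono (fun v hv => by
        rw [Finset.coe_erase] at hv
        exact ⟨subset_convexHull ℝ _ hv.1, hv.2⟩) hmem
  obtain ⟨l, u, hlx, hlu⟩ := geometric_hahn_banach_point_closed (convex_convexHull ℝ _)
    ((s.erase x).finite_toSet.isClosed_convexHull ℝ) hnot
  exact ⟨hxs, l, fun v hv hvx =>
    hlx.trans (hlu v (subset_convexHull ℝ _ (Finset.mem_erase.2 ⟨hvx, hv⟩)))⟩

end ExposedFaces

section Genericity

variable {W : Type*} [NormedAddCommGroup W] [NormedSpace ℝ W]

theorem eventually_cofinite_add_mul_ne_zero {a b : ℝ} (h : a ≠ 0 ∨ b ≠ 0) :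
    ∀ᶠ t : ℝ in cofinite, a + t * b ≠ 0 := by
  rw [eventually_cofinite]
  refine Subsingleton.finite fun t ht s hs => ?_
  replace ht : a + t * b = 0 := not_not.1 ht
  replace hs : a + s * b = 0 := not_not.1 hs
  by_contra hts
  have hb : b = 0 :=
    (mul_eq_zero.1 (by linarith : (t - s) * b = 0)).resolve_left (sub_ne_zero.2 hts)
  rcases h with h | h
  · exact h (by simpa [hb] using ht)
  · exact h hb

theorem eventually_cofinite_add_smul_apply_ne_zero {d w : StrongDual ℝ W} {U : Finset W}
    (h : ∀ u ∈ U, u ≠ 0 → d u ≠ 0 ∨ w u ≠ 0) :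
    ∀ᶠ t : ℝ in cofinite, ∀ u ∈ U, u ≠ 0 → (d + t • w) u ≠ 0 := by
  rw [eventually_all_finset]
  intro u hu
  by_cases hu0 : u = 0
  · exact Eventually.of_forall fun _ h => absurd hu0 h
  · filter_upwards [eventually_cofinite_add_mul_ne_zero (h u hu hu0)] with t ht _
    simpa using ht

theorem exists_forall_apply_ne_zero (U : Finset W) :
    ∃ w : StrongDual ℝ W, ∀ u ∈ U, u ≠ 0 → w u ≠ 0 := by
  classical
  induction U using Finset.induction_on with
  | empty => exact ⟨0, by simp⟩
  | insert a U _ ih =>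
    obtain ⟨w, hw⟩ := ih
    by_cases ha : a = 0
    · refine ⟨w, fun u hu hu0 => hw u ?_ hu0⟩
      rcases Finset.mem_insert.1 hu with rfl | hu
      exacts [absurd ha hu0, hu]
    obtain ⟨g, hga⟩ := SeparatingDual.exists_ne_zero (R := ℝ) ha
    have : ∀ u ∈ insert a U, u ≠ 0 → w u ≠ 0 ∨ g u ≠ 0 := fun u hu hu0 => by
      rcases Finset.mem_insert.1 hu with rfl | hu
      exacts [Or.inr hga, Or.inl (hw u hu hu0)]
    obtain ⟨t, ht⟩ := (eventually_cofinite_add_smul_apply_ne_zero this).exists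
    exact ⟨w + t • g, ht⟩

/-- Genericity of `d` for the shadow of `V` in the plane of `(c, d)`: it makes the faces of
`convexHull ℝ V` minimizing `c + t • d`, `0 < t`, points or segments. -/
def IsShadowGeneric (c d : StrongDual ℝ W) (V : Finset W) : Prop :=
  (∀ u ∈ V, ∀ v ∈ V, d u = d v → u = v) ∧
  ∀ x ∈ V, ∀ u ∈ V, ∀ v ∈ V, c (u - x) * d (v - x) = c (v - x) * d (u - x) →
    c (u - x) • (v - x) = c (v - x) • (u - x)

theorem exists_eventually_isShadowGeneric (c : StrongDual ℝ W) (V : Finset W) :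
    ∃ w : StrongDual ℝ W, ∀ d, ∀ᶠ t : ℝ in cofinite, IsShadowGeneric c (d + t • w) V := by
  classical
  let U := (V ×ˢ V).image (fun p => p.1 - p.2) ∪ (V ×ˢ V ×ˢ V).image fun p =>
    c (p.2.1 - p.1) • (p.2.2 - p.1) - c (p.2.2 - p.1) • (p.2.1 - p.1)
  obtain ⟨w, hw⟩ := exists_forall_apply_ne_zero U
  refine ⟨w, fun d => ?_⟩
  filter_upwards [eventually_cofinite_add_smul_apply_ne_zero (d := d) fun u hu hu0 =>
    Or.inr (hw u hu hu0)] with t ht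
  refine ⟨fun u hu v hv huv => ?_, fun x hx u hu v hv h => ?_⟩
  · by_contra hne
    refine ht (u - v) (Finset.mem_union_left _ ?_) (sub_ne_zero.2 hne)
      (by simpa [map_sub, sub_eq_zero] using huv)
    exact Finset.mem_image_of_mem _ (Finset.mk_mem_product hu hv)
  · by_contra hne
    refine ht _ (Finset.mem_union_right _ ?_) (sub_ne_zero.2 hne) ?_
    · exact Finset.mem_image_of_mem _ (Finset.mk_mem_product hx (Finset.mk_mem_product hu hv))
    · simp only [map_sub, map_smul, smul_eq_mul] at h ⊢
      linear_combination h

theorem tendsto_add_smul_apply (c d : StrongDual ℝ W) (u : W) (s : ℝ) :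
    Tendsto (fun t : ℝ => (c + t • d) u) (𝓝 s) (𝓝 ((c + s • d) u)) := by
  have : Continuous fun t : ℝ => c u + t * d u := by fun_prop
  simpa using this.tendsto s

theorem exists_isShadowGeneric_of_mem_extremePoints (c : StrongDual ℝ W) {V : Finset W} {x : W}
    (hx : x ∈ (convexHull ℝ (V : Set W)).extremePoints ℝ) :
    x ∈ V ∧ ∃ d, IsShadowGeneric c d V ∧ ∀ v ∈ V, v ≠ x → (c + d) x < (c + d) v := by
  obtain ⟨hxV, l, hl⟩ := exists_forall_lt_of_mem_extremePoints hx
  obtain ⟨w, hw⟩ := exists_eventually_isShadowGeneric c V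
  have hlt : ∀ᶠ t in 𝓝 (0 : ℝ), ∀ v ∈ V, v ≠ x → (l + t • w) x < (l + t • w) v := by
    rw [eventually_all_finset]
    intro v hv
    rcases eq_or_ne v x with rfl | hvx
    · exact Eventually.of_forall fun _ h => absurd rfl h
    · exact ((tendsto_add_smul_apply l w x 0).eventually_lt (tendsto_add_smul_apply l w v 0)
        (by simpa using hl v hv hvx)).mono fun t ht _ => ht
  obtain ⟨t, hgen, hlt⟩ := ((hw (l - c)).filter_mono (nhdsNE_le_cofinite 0) |>.and
    (hlt.filter_mono nhdsWithin_le_nhds)).exists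
  refine ⟨hxV, l - c + t • w, hgen, fun v hv hvx => ?_⟩
  rw [show c + (l - c + t • w) = l + t • w by abel]
  exact hlt v hv hvx

end Genericity

section ShadowVertex

variable {W : Type*} [NormedAddCommGroup W] [NormedSpace ℝ W] {c d : StrongDual ℝ W}
  {V : Finset W} {x : W}

theorem exists_tie_of_exists_lt {t₁ : ℝ} (ht₁ : 0 < t₁)
    (huniq : ∀ v ∈ V, v ≠ x → (c + t₁ • d) x < (c + t₁ • d) v) (hlt : ∃ v ∈ V, c v < c x) :
    ∃ s ∈ Ioo 0 t₁, (∀ v ∈ V, (c + s • d) x ≤ (c + s • d) v) ∧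
      ∃ v ∈ V, v ≠ x ∧ (c + s • d) v = (c + s • d) x := by
  simp only [add_apply, smul_apply, smul_eq_mul] at huniq ⊢
  obtain ⟨v₀, hv₀, hv₀x⟩ := hlt
  set T := V.filter (c · < c x)
  have hdT : ∀ v ∈ T, d x < d v := fun v hv => by
    obtain ⟨hv, hcv⟩ := Finset.mem_filter.1 hv
    nlinarith [huniq v hv (by rintro rfl; exact lt_irrefl _ hcv)]
  -- `s` is the last parameter, going down from `t₁`, at which some `v` with `c v < c x` ties `x`
  let r v := (c x - c v) / (d v - d x)
  have hr : ∀ v ∈ T, r v * (d v - d x) = c x - c v := fun v hv =>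
    div_mul_cancel₀ _ (sub_ne_zero.2 (hdT v hv).ne')
  obtain ⟨v, hvT, hvmax⟩ := T.exists_max_image r ⟨v₀, Finset.mem_filter.2 ⟨hv₀, hv₀x⟩⟩
  obtain ⟨hv, hcv⟩ := Finset.mem_filter.1 hvT
  have hdv := hdT v hvT
  have hvx : v ≠ x := by rintro rfl; exact lt_irrefl _ hcv
  have hrv : r v ∈ Ioo 0 t₁ := ⟨div_pos (by linarith) (by linarith),
    (div_lt_iff₀ (by linarith)).2 (by linarith [huniq v hv hvx])⟩
  refine ⟨r v, hrv, fun u hu => ?_, v, hv, hvx, by linarith [hr v hvT]⟩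
  by_cases huT : u ∈ T
  · nlinarith [hvmax u huT, hr u huT, hdT u huT]
  rcases eq_or_ne u x with rfl | hux
  · exact le_rfl
  have hcu : c x ≤ c u := not_lt.1 fun h => huT (Finset.mem_filter.2 ⟨hu, h⟩)
  nlinarith [huniq u hu hux, hrv.1, hrv.2]

theorem IsShadowGeneric.mem_segment_of_apply_sub_eq_zero (hgen : IsShadowGeneric c d V)
    (hx : x ∈ V) {y v : W} (hy : y ∈ V) (hv : v ∈ V) {s : ℝ} (hs : s ≠ 0)
    (hfy : (c + s • d) (y - x) = 0) (hfv : (c + s • d) (v - x) = 0) (hdxy : d x < d y)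
    (hdxv : d x ≤ d v) (hdvy : d v ≤ d y) : v ∈ segment ℝ x y := by
  simp only [add_apply, smul_apply, smul_eq_mul] at hfy hfv
  have hdyx : 0 < d (y - x) := by rw [map_sub]; linarith
  have hcyx : c (y - x) ≠ 0 := fun h =>
    hs ((mul_eq_zero.1 (by linarith : s * d (y - x) = 0)).resolve_right hdyx.ne')
  have hpar := hgen.2 x hx y hy v hv (by linear_combination d (v - x) * hfy - d (y - x) * hfv)
  have hθ : d (v - x) / d (y - x) = c (v - x) / c (y - x) := by
    rw [div_eq_div_iff hdyx.ne' hcyx]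
    linear_combination d (v - x) * hfy - d (y - x) * hfv
  rw [segment_eq_image']
  refine ⟨d (v - x) / d (y - x), ⟨div_nonneg ?_ hdyx.le, (div_le_one hdyx).2 ?_⟩, ?_⟩
  · rw [map_sub]; linarith
  · simp only [map_sub]; linarith
  · dsimp only
    rw [hθ, div_eq_inv_mul, mul_smul, ← hpar, smul_smul, inv_mul_cancel₀ hcyx, one_smul]
    abel

theorem exists_isExposed_segment_of_tie (hgen : IsShadowGeneric c d V) (hx : x ∈ V) {s t₁ : ℝ}
    (hs : s ∈ Ioo 0 t₁) (huniq : ∀ v ∈ V, v ≠ x → (c + t₁ • d) x < (c + t₁ • d) v)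
    (hmin : ∀ v ∈ V, (c + s • d) x ≤ (c + s • d) v)
    (htie : ∃ v ∈ V, v ≠ x ∧ (c + s • d) v = (c + s • d) x) :
    ∃ y ∈ V, y ≠ x ∧ (c + s • d) y = (c + s • d) x ∧ c y < c x ∧
      IsExposed ℝ (convexHull ℝ (V : Set W)) (segment ℝ x y) ∧
      ∀ v ∈ V, (c + s • d) v = (c + s • d) y → d v ≤ d y := by
  set f := c + s • d
  set S := V.filter (f · = f x)
  have hmemS : ∀ v, v ∈ (-f).toExposed (V : Set W) ↔ v ∈ S := fun v => by
    refine ⟨fun ⟨hv, hvmin⟩ => Finset.mem_filter.2 ⟨hv, ?_⟩, fun hvS => ?_⟩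
    · exact le_antisymm (by simpa using hvmin x hx) (hmin v hv)
    · obtain ⟨hv, hfv⟩ := Finset.mem_filter.1 hvS
      exact ⟨hv, fun u hu => by simpa [hfv] using hmin u hu⟩
  have hgap : ∀ v ∈ S, v ≠ x → d x < d v := fun v hvS hvx => by
    have h₁ := huniq v (Finset.mem_filter.1 hvS).1 hvx
    have h₂ := (Finset.mem_filter.1 hvS).2
    simp only [f, add_apply, smul_apply, smul_eq_mul] at h₁ h₂
    nlinarith [hs.2]
  -- the other endpoint of the edge is the tie that is highest for `d`
  obtain ⟨y, hyS, hymax⟩ := S.exists_max_image d ⟨x, Finset.mem_filter.2 ⟨hx, rfl⟩⟩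
  obtain ⟨hy, hfy⟩ := Finset.mem_filter.1 hyS
  have hyx : y ≠ x := by
    obtain ⟨v, hv, hvx, hfv⟩ := htie
    have hvS : v ∈ S := Finset.mem_filter.2 ⟨hv, hfv⟩
    rintro rfl
    exact (hgap v hvS hvx).not_ge (hymax v hvS)
  have hdxy := hgap y hyS hyx
  have hseg : ∀ v ∈ S, v ∈ segment ℝ x y := fun v hvS => by
    obtain ⟨hv, hfv⟩ := Finset.mem_filter.1 hvS
    refine hgen.mem_segment_of_apply_sub_eq_zero hx hy hv hs.1.ne'
      (by rw [map_sub, hfy, sub_self]) (by rw [map_sub, hfv, sub_self]) hdxy ?_ (hymax v hvS)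
    rcases eq_or_ne v x with rfl | hvx
    exacts [le_rfl, (hgap v hvS hvx).le]
  refine ⟨y, hy, hyx, hfy, ?_, ?_, fun v hv hfv =>
    hymax v (Finset.mem_filter.2 ⟨hv, hfv.trans hfy⟩)⟩
  · simp only [f, add_apply, smul_apply, smul_eq_mul] at hfy
    nlinarith [hs.1]
  · exact isExposed_convexHull_segment ((hmemS x).2 (Finset.mem_filter.2 ⟨hx, rfl⟩))
      ((hmemS y).2 hyS) fun v hv => hseg v ((hmemS v).1 hv)

theorem eventually_forall_lt_of_tie {y : W} {s : ℝ} (hinj : ∀ u ∈ V, ∀ v ∈ V, d u = d v → u = v)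
    (hy : y ∈ V) (hmin : ∀ v ∈ V, (c + s • d) y ≤ (c + s • d) v)
    (hmax : ∀ v ∈ V, (c + s • d) v = (c + s • d) y → d v ≤ d y) :
    ∀ᶠ t in 𝓝[<] s, ∀ v ∈ V, v ≠ y → (c + t • d) y < (c + t • d) v := by
  rw [eventually_all_finset]
  intro v hv
  rcases eq_or_ne v y with rfl | hvy
  · exact Eventually.of_forall fun _ h => absurd rfl h
  rcases (hmin v hv).eq_or_lt with htie | hlt
  · have hdv : d v < d y := (hmax v hv htie.symm).lt_of_ne fun h => hvy (hinj v hv y hy h)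
    refine eventually_nhdsWithin_of_forall fun t (ht : t < s) _ => ?_
    simp only [add_apply, smul_apply, smul_eq_mul] at htie ⊢
    nlinarith
  · exact (((tendsto_add_smul_apply c d y s).eventually_lt (tendsto_add_smul_apply c d v s)
      hlt).filter_mono nhdsWithin_le_nhds).mono fun t ht _ => ht

theorem exists_shadow_step (hgen : IsShadowGeneric c d V) (hx : x ∈ V) {t₁ : ℝ} (ht₁ : 0 < t₁)
    (huniq : ∀ v ∈ V, v ≠ x → (c + t₁ • d) x < (c + t₁ • d) v) (hlt : ∃ v ∈ V, c v < c x) :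
    ∃ y ∈ V, ∃ s t₂ : ℝ, 0 < t₂ ∧ t₂ < s ∧ s < t₁ ∧ y ≠ x ∧ (c + s • d) (y - x) = 0 ∧
      c y < c x ∧ IsExposed ℝ (convexHull ℝ (V : Set W)) (segment ℝ x y) ∧
      ∀ v ∈ V, v ≠ y → (c + t₂ • d) y < (c + t₂ • d) v := by
  obtain ⟨s, hs, hmin, htie⟩ := exists_tie_of_exists_lt ht₁ huniq hlt
  obtain ⟨y, hy, hyx, hfy, hcy, hexp, hmax⟩ :=
    exists_isExposed_segment_of_tie hgen hx hs huniq hmin htie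
  obtain ⟨t₂, huniq₂, ht₂⟩ := ((eventually_forall_lt_of_tie hgen.1 hy
    (fun v hv => hfy ▸ hmin v hv) hmax).and (Ioo_mem_nhdsLT hs.1)).exists
  exact ⟨y, hy, s, t₂, ht₂.1, ht₂.2, hs.2, hyx, by rw [map_sub, hfy, sub_self], hcy, hexp, huniq₂⟩

end ShadowVertex

section Directions

variable {W : Type*} [NormedAddCommGroup W] [NormedSpace ℝ W]

/-- The lines spanned by the vectors of `E` not orthogonal to `c`, each represented by its point
on the hyperplane `c = 1`. -/
noncomputable def directions [DecidableEq W] (c : StrongDual ℝ W) (E : Finset W) : Finset W :=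
  {e ∈ E | c e ≠ 0}.image fun e => (c e)⁻¹ • e

theorem card_directions_le [DecidableEq W] (c : StrongDual ℝ W) (E : Finset W) :
    (directions c E).card ≤ E.card :=
  Finset.card_image_le.trans (Finset.card_filter_le _ _)

theorem inv_apply_smul_smul (c : StrongDual ℝ W) {r : ℝ} (hr : r ≠ 0) (u : W) :
    (c (r • u))⁻¹ • r • u = (c u)⁻¹ • u := by
  rw [map_smul, smul_eq_mul, smul_smul, mul_inv_rev, mul_assoc, inv_mul_cancel₀ hr, mul_one]

theorem inv_apply_smul_mem_directions [DecidableEq W] {c : StrongDual ℝ W} {E : Finset W}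
    {u e : W} {r : ℝ} (he : e ∈ E) (hu : u = r • e) (hcu : c u ≠ 0) :
    (c u)⁻¹ • u ∈ directions c E := by
  subst hu
  rw [map_smul, smul_eq_mul] at hcu
  rw [inv_apply_smul_smul c (left_ne_zero_of_mul hcu)]
  exact Finset.mem_image_of_mem _ (Finset.mem_filter.2 ⟨he, right_ne_zero_of_mul hcu⟩)

theorem neg_inv_apply_inv_apply_smul {c d : StrongDual ℝ W} {u : W} {s : ℝ} (hcu : c u ≠ 0)
    (h : (c + s • d) u = 0) : -(d ((c u)⁻¹ • u))⁻¹ = s := by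
  simp only [add_apply, smul_apply, smul_eq_mul, map_smul] at h ⊢
  have hdu : d u ≠ 0 := fun h0 => hcu (by simpa [h0] using h)
  field_simp
  linarith

end Directions

section MonotonePaths

variable {n : ℕ}

noncomputable def dotCLM (c : Fin n → ℝ) : StrongDual ℝ (Fin n → ℝ) :=
  ∑ i, c i • ContinuousLinearMap.proj i

@[simp] theorem dotCLM_apply (c x : Fin n → ℝ) : dotCLM c x = ∑ i, c i * x i := by
  simp [dotCLM]

namespace HasMonoPathLe

variable {P : Set (Fin n → ℝ)} {c x y : Fin n → ℝ} {N M : ℕ}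

theorem mono (h : HasMonoPathLe n P c x N) (hNM : N ≤ M) : HasMonoPathLe n P c x M :=
  let ⟨L, hL, rest⟩ := h
  ⟨L, hL.trans hNM, rest⟩

theorem of_forall_le (hx : x ∈ P.extremePoints ℝ)
    (hmin : ∀ y ∈ P, ∑ i, c i * x i ≤ ∑ i, c i * y i) : HasMonoPathLe n P c x N :=
  ⟨0, N.zero_le, fun _ => x, rfl, fun _ => hx, fun t => t.elim0, hmin⟩

theorem cons (h : HasMonoPathLe n P c y N) (hx : x ∈ P.extremePoints ℝ) (hxy : x ≠ y)
    (hexp : IsExposed ℝ P (segment ℝ x y)) (hc : ∑ i, c i * y i < ∑ i, c i * x i) :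
    HasMonoPathLe n P c x (N + 1) := by
  obtain ⟨L, hL, p, hp0, hpext, hstep, hlast⟩ := h
  refine ⟨L + 1, by omega, Fin.cons x p, rfl, Fin.cases hx hpext, fun t => ?_, ?_⟩
  · cases t using Fin.cases with
    | zero => simpa [hp0] using ⟨hxy, hexp, hc⟩
    | succ t => simpa [← Fin.succ_castSucc] using hstep t
  · simpa [← Fin.succ_last] using hlast

end HasMonoPathLe

end MonotonePaths

theorem Finset.card_filter_lt_lt_card_filter_lt {α β : Type*} [LinearOrder β] {D : Finset α}
    {g : α → β} {a b : β} {κ : α} (hκ : κ ∈ D) (ha : a ≤ g κ) (hb : g κ < b) :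
    (D.filter (g · < a)).card < (D.filter (g · < b)).card :=
  Finset.card_lt_card <| (Finset.ssubset_iff_of_subset (Finset.monotone_filter_right D
    fun _ _ h => h.trans (ha.trans_lt hb))).2
      ⟨κ, Finset.mem_filter.2 ⟨hκ, hb⟩, fun h => (Finset.mem_filter.1 h).2.not_ge ha⟩

section Polytope

variable {n : ℕ}

theorem hasMonoPathLe_of_isShadowGeneric {c : Fin n → ℝ} {d : StrongDual ℝ (Fin n → ℝ)}
    {V E : Finset (Fin n → ℝ)} (hgen : IsShadowGeneric (dotCLM c) d V)
    (hE : ∀ x y : Fin n → ℝ, x ≠ y →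
      IsExposed ℝ (convexHull ℝ (V : Set (Fin n → ℝ))) (segment ℝ x y) →
      ∃ e ∈ E, ∃ r : ℝ, y - x = r • e)
    {x : Fin n → ℝ} (hx : x ∈ V) {t : ℝ} (ht : 0 < t)
    (huniq : ∀ v ∈ V, v ≠ x → (dotCLM c + t • d) x < (dotCLM c + t • d) v) :
    HasMonoPathLe n (convexHull ℝ (V : Set (Fin n → ℝ))) c x
      ((directions (dotCLM c) E).filter fun κ => -(d κ)⁻¹ < t).card := by
  induction hk : ((directions (dotCLM c) E).filter fun κ => -(d κ)⁻¹ < t).card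
    using Nat.strong_induction_on generalizing x t with
  | _ k ih =>
  have hext : x ∈ (convexHull ℝ (V : Set (Fin n → ℝ))).extremePoints ℝ :=
    mem_extremePoints_convexHull_of_forall_lt (l := -(dotCLM c + t • d)) hx
      fun v hv hvx => neg_lt_neg (huniq v hv hvx)
  by_cases hlt : ∃ v ∈ V, dotCLM c v < dotCLM c x
  · obtain ⟨y, hy, s, t₂, ht₂, ht₂s, hst, hyx, hcross, hcy, hexp, huniq₂⟩ :=
      exists_shadow_step hgen hx ht huniq hlt
    have hcyx : dotCLM c (y - x) ≠ 0 := by rw [map_sub]; exact sub_ne_zero.2 hcy.ne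
    obtain ⟨e, he, r, hr⟩ := hE x y hyx.symm hexp
    -- the direction of the edge `[x, y]` crosses at `s ∈ [t₂, t)`, so the count drops
    set κ := (dotCLM c (y - x))⁻¹ • (y - x)
    have hκ : κ ∈ directions (dotCLM c) E := inv_apply_smul_mem_directions he hr hcyx
    have hκs : -(d κ)⁻¹ = s := neg_inv_apply_inv_apply_smul hcyx hcross
    have hcard : ((directions (dotCLM c) E).filter fun κ => -(d κ)⁻¹ < t₂).card < k :=
      hk ▸ Finset.card_filter_lt_lt_card_filter_lt hκ (hκs ▸ ht₂s.le) (hκs ▸ hst)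
    exact ((ih _ hcard hy ht₂ huniq₂ rfl).cons hext hyx.symm hexp (by simpa using hcy)).mono hcard
  · simp only [not_exists, not_and, not_lt] at hlt
    refine HasMonoPathLe.of_forall_le hext fun y hy => ?_
    have hy' : y ∈ {w | dotCLM c x ≤ dotCLM c w} := convexHull_min (fun v hv => hlt v hv)
      (convex_halfSpace_ge (dotCLM c).toLinearMap.isLinear _) hy
    simpa using hy'

theorem hasMonoPathLe_card_directions {c : Fin n → ℝ} {V E : Finset (Fin n → ℝ)}
    (hE : ∀ x y : Fin n → ℝ, x ≠ y →
      IsExposed ℝ (convexHull ℝ (V : Set (Fin n → ℝ))) (segment ℝ x y) →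
      ∃ e ∈ E, ∃ r : ℝ, y - x = r • e)
    {x : Fin n → ℝ} (hx : x ∈ (convexHull ℝ (V : Set (Fin n → ℝ))).extremePoints ℝ) :
    HasMonoPathLe n (convexHull ℝ (V : Set (Fin n → ℝ))) c x (directions (dotCLM c) E).card := by
  obtain ⟨hxV, d, hgen, huniq⟩ := exists_isShadowGeneric_of_mem_extremePoints (dotCLM c) hx
  exact (hasMonoPathLe_of_isShadowGeneric hgen hE hxV one_pos (by simpa using huniq)).mono
    (Finset.card_filter_le _ _)

end Polytope

theorem Fin.exists_castSucc_ne_succ {α : Type*} {L : ℕ} (f : Fin (L + 1) → α)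
    (h : f 0 ≠ f (Fin.last L)) : ∃ k : Fin L, f k.castSucc ≠ f k.succ := by
  by_contra! hf
  exact h (Fin.induction (motive := fun i => f 0 = f i) rfl (fun k hk => hk.trans (hf k)) _)

section Zonotope

open scoped Pointwise

variable {n : ℕ} {E : Finset (Fin n → ℝ)}

theorem sum_mem_zonotopeOf {S : Finset (Fin n → ℝ)} (hS : S ⊆ E) :
    ∑ e ∈ S, e ∈ zonotopeOf n E := by
  refine ⟨fun e => if e ∈ S then 1 else 0, fun e => by dsimp only; split_ifs <;> norm_num, ?_⟩
  simp only [ite_smul, one_smul, zero_smul, Finset.sum_ite_mem, Finset.inter_eq_right.2 hS]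

theorem convex_zonotopeOf : Convex ℝ (zonotopeOf n E) := by
  rintro _ ⟨t₁, ht₁, rfl⟩ _ ⟨t₂, ht₂, rfl⟩ a b ha hb hab
  refine ⟨fun e => a * t₁ e + b * t₂ e, fun e => ⟨?_, ?_⟩, ?_⟩
  · nlinarith [ht₁ e, ht₂ e]
  · nlinarith [ht₁ e, ht₂ e]
  · simp only [Finset.smul_sum, ← Finset.sum_add_distrib, add_smul, smul_smul]

theorem zonotopeOf_eq_convexHull :
    zonotopeOf n E = convexHull ℝ ↑(E.powerset.image fun S => ∑ e ∈ S, e) := by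
  refine Subset.antisymm ?_ (convexHull_min ?_ convex_zonotopeOf)
  · rintro _ ⟨t, ht, rfl⟩
    have hsum : ∑ e ∈ E, t e • e ∈ ∑ e ∈ E, convexHull ℝ ({0, e} : Set (Fin n → ℝ)) := by
      refine (Set.mem_finsetSum _ _ _).2 ⟨fun e => t e • e, fun {e} _ => ?_, rfl⟩
      rw [convexHull_pair]
      exact ⟨1 - t e, t e, by linarith [ht e], (ht e).1, by ring, by simp⟩
    rw [← convexHull_sum] at hsum
    refine convexHull_mono (fun z hz => ?_) hsum
    obtain ⟨g, hg, rfl⟩ := (Set.mem_finsetSum _ _ _).1 hz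
    refine Finset.mem_image.2
      ⟨{e ∈ E | g e ≠ 0}, Finset.mem_powerset.2 (Finset.filter_subset _ _), ?_⟩
    rw [← Finset.sum_filter_ne_zero (f := g) E]
    refine Finset.sum_congr rfl fun e he => ?_
    obtain ⟨he, hge⟩ := Finset.mem_filter.1 he
    exact ((hg he).resolve_left hge).symm
  · intro z hz
    obtain ⟨S, hS, rfl⟩ := Finset.mem_image.1 hz
    exact sum_mem_zonotopeOf (Finset.mem_powerset.1 hS)

theorem isCompact_zonotopeOf : IsCompact (zonotopeOf n E) := by
  rw [zonotopeOf_eq_convexHull]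
  exact (Finset.finite_toSet _).isCompact_convexHull ℝ

theorem exists_subset_sum_eq_of_mem_extremePoints {z : Fin n → ℝ}
    (hz : z ∈ (zonotopeOf n E).extremePoints ℝ) : ∃ S ⊆ E, ∑ e ∈ S, e = z := by
  rw [zonotopeOf_eq_convexHull] at hz
  obtain ⟨S, hS, hSz⟩ := Finset.mem_image.1 (extremePoints_convexHull_subset hz)
  exact ⟨S, Finset.mem_powerset.1 hS, hSz⟩

theorem mem_of_sum_mem_toExposed {l : StrongDual ℝ (Fin n → ℝ)} {S : Finset (Fin n → ℝ)}
    (hS : S ⊆ E) (hmax : ∑ e ∈ S, e ∈ l.toExposed (zonotopeOf n E)) {e : Fin n → ℝ} (he : e ∈ E)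
    (hpos : 0 < l e) : e ∈ S := by
  by_contra heS
  have := hmax.2 _ (sum_mem_zonotopeOf (Finset.insert_subset he hS))
  rw [Finset.sum_insert heS, map_add] at this
  linarith

theorem notMem_of_sum_mem_toExposed {l : StrongDual ℝ (Fin n → ℝ)} {S : Finset (Fin n → ℝ)}
    (hS : S ⊆ E) (hmax : ∑ e ∈ S, e ∈ l.toExposed (zonotopeOf n E)) {e : Fin n → ℝ}
    (hneg : l e < 0) : e ∉ S := by
  intro heS
  have := hmax.2 _ (sum_mem_zonotopeOf ((S.erase_subset e).trans hS))
  rw [Finset.sum_erase_eq_sub heS, map_sub] at this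
  linarith

theorem exists_eq_smul_sub_of_mem_of_notMem {x y : Fin n → ℝ}
    (hexp : IsExposed ℝ (zonotopeOf n E) (segment ℝ x y)) {Sx Sy : Finset (Fin n → ℝ)}
    (hSx : Sx ⊆ E) (hSy : Sy ⊆ E) (hx : ∑ e ∈ Sx, e = x) (hy : ∑ e ∈ Sy, e = y) {e : Fin n → ℝ}
    (hex : e ∈ Sx) (hey : e ∉ Sy) : ∃ θ : ℝ, e = θ • (y - x) := by
  obtain ⟨l, hl⟩ := hexp ⟨x, left_mem_segment ℝ x y⟩
  replace hl : segment ℝ x y = l.toExposed (zonotopeOf n E) := hl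
  have hxl : ∑ e ∈ Sx, e ∈ l.toExposed (zonotopeOf n E) := hx ▸ hl ▸ left_mem_segment ℝ x y
  have hyl : ∑ e ∈ Sy, e ∈ l.toExposed (zonotopeOf n E) := hy ▸ hl ▸ right_mem_segment ℝ x y
  have hle : l e = 0 := le_antisymm
    (not_lt.1 fun h => hey (mem_of_sum_mem_toExposed hSy hyl (hSx hex) h))
    (not_lt.1 fun h => notMem_of_sum_mem_toExposed hSx hxl h hex)
  -- dropping `e` from `x` stays on the face exposed by `l`, which is the edge
  have hxe : x - e ∈ segment ℝ x y := by
    rw [hl]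
    refine ⟨?_, fun w hw => ?_⟩
    · rw [← hx, ← Finset.sum_erase_eq_sub hex]
      exact sum_mem_zonotopeOf ((Sx.erase_subset e).trans hSx)
    · rw [map_sub, hle, sub_zero, ← hx]
      exact hxl.2 w hw
  obtain ⟨θ, -, hθ⟩ := (segment_eq_image' ℝ x y ▸ hxe :)
  exact ⟨-θ, by linear_combination (norm := module) hθ⟩

theorem exists_step_eq_smul_of_apply_ne_zero {c : StrongDual ℝ (Fin n → ℝ)} {L : ℕ} {q : Fin (L + 1) → Fin n → ℝ}
    (hq : ∀ k, q k ∈ (zonotopeOf n E).extremePoints ℝ)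
    (hstep : ∀ k : Fin L, IsExposed ℝ (zonotopeOf n E) (segment ℝ (q k.castSucc) (q k.succ)))
    (hfirst : q 0 ∈ c.toExposed (zonotopeOf n E))
    (hlast : q (Fin.last L) ∈ (-c).toExposed (zonotopeOf n E)) {e : Fin n → ℝ} (he : e ∈ E)
    (hce : c e ≠ 0) : ∃ k : Fin L, ∃ θ : ℝ, e = θ • (q k.succ - q k.castSucc) := by
  choose S hS hSq using fun k => exists_subset_sum_eq_of_mem_extremePoints (hq k)
  have hmem : ∀ {k} {l : StrongDual ℝ (Fin n → ℝ)}, q k ∈ l.toExposed (zonotopeOf n E) →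
      l e ≠ 0 → (e ∈ S k ↔ 0 < l e) := fun {k} {l} hk hle => by
    rw [← hSq k] at hk
    exact ⟨fun h => (lt_or_gt_of_ne hle).resolve_left fun hneg =>
      notMem_of_sum_mem_toExposed (hS k) hk hneg h, mem_of_sum_mem_toExposed (hS k) hk he⟩
  have hflip : (e ∈ S 0) ≠ (e ∈ S (Fin.last L)) := by
    rw [ne_eq, eq_iff_iff, hmem hfirst hce, hmem hlast (by simpa using hce)]
    simp only [neg_apply, Left.neg_pos_iff]
    intro h
    rcases lt_or_gt_of_ne hce with hneg | hpos
    exacts [lt_asymm hneg (h.2 hneg), lt_asymm hpos (h.1 hpos)]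
  obtain ⟨k, hk⟩ := Fin.exists_castSucc_ne_succ (fun k => e ∈ S k) hflip
  replace hk : ¬(e ∈ S k.castSucc ↔ e ∈ S k.succ) := fun h => hk (propext h)
  by_cases hek : e ∈ S k.castSucc
  · exact ⟨k, exists_eq_smul_sub_of_mem_of_notMem (hstep k) (hS _) (hS _) (hSq _) (hSq _) hek
      (by tauto)⟩
  · obtain ⟨θ, hθ⟩ := exists_eq_smul_sub_of_mem_of_notMem
      (segment_symm ℝ (q k.castSucc) _ ▸ hstep k) (hS _) (hS _) (hSq _) (hSq _) (by tauto) hek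
    exact ⟨k, -θ, by rw [hθ, neg_smul, ← smul_neg, neg_sub]⟩

theorem card_directions_le_of_forall_hasMonoPathLe {c : Fin n → ℝ} {N : ℕ}
    (h : ∀ z ∈ (zonotopeOf n E).extremePoints ℝ, HasMonoPathLe n (zonotopeOf n E) c z N) :
    (directions (dotCLM c) E).card ≤ N := by
  obtain ⟨z, hz, hzmax⟩ := exists_mem_extremePoints_mem_toExposed isCompact_zonotopeOf
    ⟨0, by simpa using sum_mem_zonotopeOf (Finset.empty_subset E)⟩ (dotCLM c)
  obtain ⟨L, hLN, q, rfl, hq, hstep, hlast⟩ := h _ hz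
  have hcover : directions (dotCLM c) E ⊆ Finset.univ.image fun k : Fin L =>
      (dotCLM c (q k.succ - q k.castSucc))⁻¹ • (q k.succ - q k.castSucc) := by
    intro κ hκ
    obtain ⟨e, he, rfl⟩ := Finset.mem_image.1 hκ
    obtain ⟨he, hce⟩ := Finset.mem_filter.1 he
    obtain ⟨k, θ, rfl⟩ := exists_step_eq_smul_of_apply_ne_zero hq (fun k => (hstep k).2.1) hzmax
      ⟨(hq _).1, fun y hy => by simpa using hlast y hy⟩ he hce
    rw [map_smul, smul_eq_mul] at hce
    exact Finset.mem_image.2 ⟨k, Finset.mem_univ k,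
      (inv_apply_smul_smul _ (left_ne_zero_of_mul hce) _).symm⟩
  calc (directions (dotCLM c) E).card ≤ _ := Finset.card_le_card hcover
    _ ≤ L := Finset.card_image_le.trans (by simp)
    _ ≤ N := hLN

end Zonotope

theorem stmt_19_general (n : ℕ) (Vset : Finset (Fin n → ℝ)) (E : Finset (Fin n → ℝ))
    (P : Set (Fin n → ℝ)) (hP : P = convexHull ℝ (Vset : Set (Fin n → ℝ)))
    (hE : ∀ x y : Fin n → ℝ, x ≠ y → IsExposed ℝ P (segment ℝ x y) →
      ∃ e ∈ E, ∃ r : ℝ, y - x = r • e)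
    (c : Fin n → ℝ) :
    (∀ N : ℕ,
      (∀ z0 ∈ Set.extremePoints ℝ (zonotopeOf n E),
        HasMonoPathLe n (zonotopeOf n E) c z0 N) →
      ∀ x0 ∈ Set.extremePoints ℝ P, HasMonoPathLe n P c x0 N) ∧
    ∀ x0 ∈ Set.extremePoints ℝ P, HasMonoPathLe n P c x0 E.card := by
  subst hP
  refine ⟨fun N hN x0 hx0 => ?_, fun x0 hx0 => ?_⟩
  · exact (hasMonoPathLe_card_directions hE hx0).mono
      (card_directions_le_of_forall_hasMonoPathLe hN)
  · exact (hasMonoPathLe_card_directions hE hx0).mono (card_directions_le _ E)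

/-- if the finite set E contains all edge directions of a polytope P, then the
monotone diameter of P is bounded by that of the zonotope Z(E): any uniform bound N on the
length of shortest monotone paths on Z(E) also works for P; in particular the monotone
diameter of P is at most |E|. -/
theorem stmt_19 (n : ℕ) (Vset : Finset (Fin n → ℝ)) (E : Finset (Fin n → ℝ))
    (P : Set (Fin n → ℝ)) (hP : P = convexHull ℝ (Vset : Set (Fin n → ℝ)))
    (hE : ∀ x y : Fin n → ℝ, x ≠ y → IsExposed ℝ P (segment ℝ x y) →
      ∃ e ∈ E, ∃ r : ℝ, y - x = r • e)
    (c : Fin n → ℝ)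
    (hnd : ∀ x ∈ Set.extremePoints ℝ P, ∀ y ∈ Set.extremePoints ℝ P, x ≠ y →
      ∑ i, c i * x i ≠ ∑ i, c i * y i) :
    (∀ N : ℕ,
      (∀ z0 ∈ Set.extremePoints ℝ (zonotopeOf n E),
        HasMonoPathLe n (zonotopeOf n E) c z0 N) →
      ∀ x0 ∈ Set.extremePoints ℝ P, HasMonoPathLe n P c x0 N) ∧
    ∀ x0 ∈ Set.extremePoints ℝ P, HasMonoPathLe n P c x0 E.card :=
  stmt_19_general n Vset E P hP hE c
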